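/- Let Ω be a nonempty (measurable) subset of ℝ, let Ψ : [0,∞) → [0,∞) be measurable, let p ∈ [1,∞) and k ∈ ℕ ∪ {0}. Then the space W^{k+Ψ,p}(Ω, ℝ^d), equipped with the norm ‖f‖_{W^{k+Ψ,p}} := ‖f‖_{W^{k,p}} + [f^{(k)}]_{Ψ,p}, is a Banach space (i.e., it is complete). -/

import Mathlib

open MeasureTheory Real Set Filter Topology ENNReal

noncomputable section

/-- `ℝ^d` as a Euclidean space. -/
abbrev Euc (d : ℕ) : Type := EuclideanSpace ℝ (Fin d)

/-- The `p`-th power of the generalized Sobolev–Slobodeckii seminorm `[g]_{Ψ,p}`. -/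
def semiIntegral {d : ℕ} (Ψ : ℝ → ℝ) (p : ℝ) (A : Set ℝ) (g : ℝ → Euc d) : ℝ≥0∞ :=
  ∫⁻ s₁ in A, ∫⁻ s₂ in A,
    (‖g s₂ - g s₁‖₊ : ℝ≥0∞) ^ p /
      (ENNReal.ofReal (Ψ |s₂ - s₁|) ^ p * ENNReal.ofReal |s₂ - s₁|)

/-- The generalized Sobolev–Slobodeckii seminorm `[g]_{Ψ,p}`. -/
def seminormENN {d : ℕ} (Ψ : ℝ → ℝ) (p : ℝ) (A : Set ℝ) (g : ℝ → Euc d) : ℝ≥0∞ :=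
  (semiIntegral Ψ p A g) ^ (1 / p)

/-- `u'` is the weak derivative of `u` on `Ω`. -/
def HasWeakDerivOn {d : ℕ} (Ω : Set ℝ) (u u' : ℝ → Euc d) : Prop :=
  ∀ ϕ : ℝ → ℝ, ContDiff ℝ (⊤ : ℕ∞) ϕ → HasCompactSupport ϕ → tsupport ϕ ⊆ interior Ω →
    ∫ s in Ω, deriv ϕ s • u s = - ∫ s in Ω, ϕ s • u' s

/-- `D` is a system of iterated weak derivatives of `D 0` up to order `k`, witnessing that
`D 0` belongs to `W^{k+Ψ,p}(Ω, ℝ^d)`:  `D (i+1)` is the weak derivative of `D i` for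
`i < k`, all `D i` with `i ≤ k` are in `L^p(Ω)`, and `[D k]_{Ψ,p} < ∞`. -/
def MemWkPsi (d : ℕ) (Ω : Set ℝ) (Ψ : ℝ → ℝ) (p : ℝ) (k : ℕ) (D : ℕ → ℝ → Euc d) : Prop :=
  (∀ i < k, HasWeakDerivOn Ω (D i) (D (i + 1))) ∧
  (∀ i ≤ k, MemLp (D i) (ENNReal.ofReal p) (volume.restrict Ω)) ∧
  seminormENN Ψ p Ω (D k) < ⊤

/-- The `W^{k+Ψ,p}`-norm of the difference of two functions, computed from systems of
weak derivatives: `‖f − g‖_{W^{k,p}} + [f^{(k)} − g^{(k)}]_{Ψ,p}`. -/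
def diffNormW (d : ℕ) (Ω : Set ℝ) (Ψ : ℝ → ℝ) (p : ℝ) (k : ℕ)
    (D E : ℕ → ℝ → Euc d) : ℝ≥0∞ :=
  (∑ i ∈ Finset.range (k + 1),
      eLpNorm (fun s => D i s - E i s) (ENNReal.ofReal p) (volume.restrict Ω)) +
    seminormENN Ψ p Ω (fun s => D k s - E k s)

section AuxiliaryLemmas

variable {d : ℕ} {Ψ : ℝ → ℝ} {p : ℝ} {Ω : Set ℝ}

lemma semiIntegral_congr_ae {g g' : ℝ → Euc d}
    (h : g =ᵐ[volume.restrict Ω] g') : semiIntegral Ψ p Ω g = semiIntegral Ψ p Ω g' := by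
  unfold semiIntegral
  refine lintegral_congr_ae ?_
  filter_upwards [h] with s₁ h₁
  refine lintegral_congr_ae ?_
  filter_upwards [h] with s₂ h₂
  rw [h₁, h₂]

lemma semiIntegral_sub_comm (g h : ℝ → Euc d) :
    semiIntegral Ψ p Ω (fun s => g s - h s) = semiIntegral Ψ p Ω (fun s => h s - g s) := by
  unfold semiIntegral
  refine lintegral_congr fun s₁ => lintegral_congr fun s₂ => ?_
  have : (g s₂ - h s₂) - (g s₁ - h s₁) = -((h s₂ - g s₂) - (h s₁ - g s₁)) := by abel
  rw [this, nnnorm_neg]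

lemma ennreal_div_le_liminf {a : ℝ≥0∞} {f : ℕ → ℝ≥0∞} (c : ℝ≥0∞)
    (hf : Tendsto f atTop (𝓝 a)) :
    a / c ≤ Filter.liminf (fun j => f j / c) Filter.atTop := by
  rcases eq_or_ne c ∞ with rfl | hc
  · simp
  rcases eq_or_ne c 0 with rfl | hc0
  · rcases eq_or_ne a 0 with rfl | ha
    · simp
    · have hev : ∀ᶠ j in atTop, f j / 0 = (∞ : ℝ≥0∞) := by
        filter_upwards [hf.eventually_ne ha] with j hj
        exact ENNReal.div_zero hj
      rw [Filter.liminf_congr hev, Filter.liminf_const, ENNReal.div_zero ha]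
  · have := (ENNReal.Tendsto.div_const hf (Or.inr hc0)).liminf_eq
    rw [this]

/-- the integrand of `semiIntegral`, uncurried. -/
def Jfun (Ψ : ℝ → ℝ) (p : ℝ) (g : ℝ → Euc d) (q : ℝ × ℝ) : ℝ≥0∞ :=
  (‖g q.2 - g q.1‖₊ : ℝ≥0∞) ^ p /
    (ENNReal.ofReal (Ψ |q.2 - q.1|) ^ p * ENNReal.ofReal |q.2 - q.1|)

lemma measurable_J (hΨ : Measurable Ψ) {g : ℝ → Euc d} (hg : StronglyMeasurable g) :
    Measurable (Jfun Ψ p g) := by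
  have habs : Measurable fun q : ℝ × ℝ => |q.2 - q.1| :=
    (measurable_snd.sub measurable_fst).abs
  have hnum : Measurable fun q : ℝ × ℝ => (‖g q.2 - g q.1‖₊ : ℝ≥0∞) ^ p := by
    have h1 : Measurable fun q : ℝ × ℝ => g q.2 - g q.1 :=
      (hg.measurable.comp measurable_snd).sub (hg.measurable.comp measurable_fst)
    exact (ENNReal.continuous_rpow_const.measurable.comp
      (ENNReal.continuous_coe.measurable.comp h1.nnnorm))
  have hden : Measurable fun q : ℝ × ℝ =>
      ENNReal.ofReal (Ψ |q.2 - q.1|) ^ p * ENNReal.ofReal |q.2 - q.1| := by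
    exact ((ENNReal.continuous_rpow_const.measurable.comp
      (ENNReal.measurable_ofReal.comp (hΨ.comp habs)))).mul
      (ENNReal.measurable_ofReal.comp habs)
  exact hnum.div hden

lemma fatou_semiIntegral (hΨ : Measurable Ψ)
    (u : ℕ → ℝ → Euc d) (v : ℝ → Euc d)
    (hu : ∀ j, AEStronglyMeasurable (u j) (volume.restrict Ω))
    (hconv : ∀ᵐ s ∂(volume.restrict Ω), Tendsto (fun j => u j s) atTop (𝓝 (v s))) :
    semiIntegral Ψ p Ω v ≤ Filter.liminf (fun j => semiIntegral Ψ p Ω (u j)) Filter.atTop := by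
  set μ := volume.restrict Ω with hμ
  set w : ℕ → ℝ → Euc d := fun j => (hu j).mk (u j) with hwdef
  have hwm : ∀ j, StronglyMeasurable (w j) := fun j => (hu j).stronglyMeasurable_mk
  have hwe : ∀ j, u j =ᵐ[μ] w j := fun j => (hu j).ae_eq_mk
  have hcw : ∀ᵐ s ∂μ, Tendsto (fun j => w j s) atTop (𝓝 (v s)) := by
    have hall : ∀ᵐ s ∂μ, ∀ j, u j s = w j s := ae_all_iff.2 hwe
    filter_upwards [hconv, hall] with s h1 h2
    exact h1.congr fun j => h2 j
  have hrw : (fun j => semiIntegral Ψ p Ω (u j)) = fun j => semiIntegral Ψ p Ω (w j) :=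
    funext fun j => semiIntegral_congr_ae (hwe j)
  rw [hrw]
  have hJm : ∀ j, Measurable (Jfun Ψ p (w j)) := fun j => measurable_J hΨ (hwm j)
  have key : ∀ᵐ s₁ ∂μ, (∫⁻ s₂ in Ω, Jfun Ψ p v (s₁, s₂)) ≤
      Filter.liminf (fun j => ∫⁻ s₂ in Ω, Jfun Ψ p (w j) (s₁, s₂)) Filter.atTop := by
    filter_upwards [hcw] with s₁ h₁
    calc (∫⁻ s₂ in Ω, Jfun Ψ p v (s₁, s₂))
        ≤ ∫⁻ s₂ in Ω, Filter.liminf (fun j => Jfun Ψ p (w j) (s₁, s₂)) Filter.atTop := by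
          refine lintegral_mono_ae ?_
          filter_upwards [hcw] with s₂ h₂
          have hnum : Tendsto (fun j => (‖w j s₂ - w j s₁‖₊ : ℝ≥0∞) ^ p) atTop
              (𝓝 ((‖v s₂ - v s₁‖₊ : ℝ≥0∞) ^ p)) := by
            have hc : Continuous fun x : Euc d => (‖x‖₊ : ℝ≥0∞) ^ p :=
              ENNReal.continuous_rpow_const.comp (ENNReal.continuous_coe.comp continuous_nnnorm)
            exact (hc.tendsto _).comp (h₂.sub h₁)
          exact ennreal_div_le_liminf _ hnum
      _ ≤ Filter.liminf (fun j => ∫⁻ s₂ in Ω, Jfun Ψ p (w j) (s₁, s₂)) Filter.atTop := by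
          exact lintegral_liminf_le fun j => (hJm j).comp measurable_prodMk_left
  calc semiIntegral Ψ p Ω v = ∫⁻ s₁ in Ω, ∫⁻ s₂ in Ω, Jfun Ψ p v (s₁, s₂) := rfl
    _ ≤ ∫⁻ s₁ in Ω, Filter.liminf (fun j => ∫⁻ s₂ in Ω, Jfun Ψ p (w j) (s₁, s₂)) Filter.atTop :=
        lintegral_mono_ae key
    _ ≤ Filter.liminf (fun j => ∫⁻ s₁ in Ω, ∫⁻ s₂ in Ω, Jfun Ψ p (w j) (s₁, s₂)) Filter.atTop :=
        lintegral_liminf_le fun j => (hJm j).lintegral_prod_right'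
    _ = Filter.liminf (fun j => semiIntegral Ψ p Ω (w j)) Filter.atTop := rfl

lemma ennreal_add_rpow_le {x y : ℝ≥0∞} (hp : 0 ≤ p) :
    (x + y) ^ p ≤ 2 ^ p * x ^ p + 2 ^ p * y ^ p := by
  have h1 : x + y ≤ 2 * max x y := by
    rw [two_mul]
    exact add_le_add (le_max_left x y) (le_max_right x y)
  calc (x + y) ^ p ≤ (2 * max x y) ^ p := ENNReal.rpow_le_rpow h1 hp
    _ = 2 ^ p * (max x y) ^ p := ENNReal.mul_rpow_of_nonneg _ _ hp
    _ ≤ 2 ^ p * (x ^ p + y ^ p) := by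
        gcongr
        rcases max_cases x y with ⟨h, _⟩ | ⟨h, _⟩ <;> rw [h]
        · exact le_self_add
        · exact le_add_self
    _ = 2 ^ p * x ^ p + 2 ^ p * y ^ p := by ring

lemma J_add_le (hp : 0 ≤ p) (g₁ g₂ : ℝ → Euc d) (q : ℝ × ℝ) :
    Jfun Ψ p (fun s => g₁ s + g₂ s) q ≤ 2 ^ p * Jfun Ψ p g₁ q + 2 ^ p * Jfun Ψ p g₂ q := by
  set c := ENNReal.ofReal (Ψ |q.2 - q.1|) ^ p * ENNReal.ofReal |q.2 - q.1|
  have hnum : (‖(g₁ q.2 + g₂ q.2) - (g₁ q.1 + g₂ q.1)‖₊ : ℝ≥0∞) ≤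
      (‖g₁ q.2 - g₁ q.1‖₊ : ℝ≥0∞) + (‖g₂ q.2 - g₂ q.1‖₊ : ℝ≥0∞) := by
    rw [← ENNReal.coe_add, ENNReal.coe_le_coe]
    have : (g₁ q.2 + g₂ q.2) - (g₁ q.1 + g₂ q.1) = (g₁ q.2 - g₁ q.1) + (g₂ q.2 - g₂ q.1) := by
      abel
    rw [this]
    exact nnnorm_add_le _ _
  calc Jfun Ψ p (fun s => g₁ s + g₂ s) q
      ≤ ((‖g₁ q.2 - g₁ q.1‖₊ : ℝ≥0∞) + (‖g₂ q.2 - g₂ q.1‖₊ : ℝ≥0∞)) ^ p / c := by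
        unfold Jfun
        exact ENNReal.div_le_div_right (ENNReal.rpow_le_rpow hnum hp) c
    _ ≤ (2 ^ p * (‖g₁ q.2 - g₁ q.1‖₊ : ℝ≥0∞) ^ p + 2 ^ p * (‖g₂ q.2 - g₂ q.1‖₊ : ℝ≥0∞) ^ p) / c :=
        ENNReal.div_le_div_right (ennreal_add_rpow_le hp) c
    _ = 2 ^ p * Jfun Ψ p g₁ q + 2 ^ p * Jfun Ψ p g₂ q := by
        unfold Jfun
        rw [ENNReal.add_div, div_eq_mul_inv, div_eq_mul_inv, div_eq_mul_inv, div_eq_mul_inv,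
          mul_assoc, mul_assoc]

lemma semiIntegral_add_le (hΨ : Measurable Ψ) (hp : 0 ≤ p)
    {g₁ g₂ : ℝ → Euc d}
    (h₁ : AEStronglyMeasurable g₁ (volume.restrict Ω))
    (h₂ : AEStronglyMeasurable g₂ (volume.restrict Ω)) :
    semiIntegral Ψ p Ω (fun s => g₁ s + g₂ s) ≤
      2 ^ p * semiIntegral Ψ p Ω g₁ + 2 ^ p * semiIntegral Ψ p Ω g₂ := by
  set μ := volume.restrict Ω with hμ
  have h2p : (2 : ℝ≥0∞) ^ p ≠ ∞ := ENNReal.rpow_ne_top_of_nonneg hp (by norm_num)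
  set w₁ := h₁.mk g₁ with hw₁
  set w₂ := h₂.mk g₂ with hw₂
  have hm₁ := h₁.stronglyMeasurable_mk
  have hm₂ := h₂.stronglyMeasurable_mk
  have e₁ : semiIntegral Ψ p Ω g₁ = semiIntegral Ψ p Ω w₁ := semiIntegral_congr_ae h₁.ae_eq_mk
  have e₂ : semiIntegral Ψ p Ω g₂ = semiIntegral Ψ p Ω w₂ := semiIntegral_congr_ae h₂.ae_eq_mk
  have e₀ : semiIntegral Ψ p Ω (fun s => g₁ s + g₂ s) =
      semiIntegral Ψ p Ω (fun s => w₁ s + w₂ s) := by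
    refine semiIntegral_congr_ae ?_
    filter_upwards [h₁.ae_eq_mk, h₂.ae_eq_mk] with s hs₁ hs₂
    rw [hs₁, hs₂]
  rw [e₀, e₁, e₂]
  have hJ₁ : Measurable (Jfun Ψ p w₁) := measurable_J hΨ hm₁
  have hJ₂ : Measurable (Jfun Ψ p w₂) := measurable_J hΨ hm₂
  have inner_le : ∀ s₁ : ℝ, (∫⁻ s₂ in Ω, Jfun Ψ p (fun s => w₁ s + w₂ s) (s₁, s₂)) ≤
      2 ^ p * (∫⁻ s₂ in Ω, Jfun Ψ p w₁ (s₁, s₂)) + 2 ^ p * (∫⁻ s₂ in Ω, Jfun Ψ p w₂ (s₁, s₂)) := by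
    intro s₁
    calc (∫⁻ s₂ in Ω, Jfun Ψ p (fun s => w₁ s + w₂ s) (s₁, s₂))
        ≤ ∫⁻ s₂ in Ω, (2 ^ p * Jfun Ψ p w₁ (s₁, s₂) + 2 ^ p * Jfun Ψ p w₂ (s₁, s₂)) :=
          lintegral_mono fun s₂ => J_add_le hp w₁ w₂ (s₁, s₂)
      _ = (∫⁻ s₂ in Ω, 2 ^ p * Jfun Ψ p w₁ (s₁, s₂)) + ∫⁻ s₂ in Ω, 2 ^ p * Jfun Ψ p w₂ (s₁, s₂) :=
          lintegral_add_left (((hJ₁.comp measurable_prodMk_left)).const_mul _) _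
      _ = 2 ^ p * (∫⁻ s₂ in Ω, Jfun Ψ p w₁ (s₁, s₂)) +
            2 ^ p * (∫⁻ s₂ in Ω, Jfun Ψ p w₂ (s₁, s₂)) := by
          rw [lintegral_const_mul' _ _ h2p, lintegral_const_mul' _ _ h2p]
  calc semiIntegral Ψ p Ω (fun s => w₁ s + w₂ s)
      = ∫⁻ s₁ in Ω, ∫⁻ s₂ in Ω, Jfun Ψ p (fun s => w₁ s + w₂ s) (s₁, s₂) := rfl
    _ ≤ ∫⁻ s₁ in Ω, (2 ^ p * (∫⁻ s₂ in Ω, Jfun Ψ p w₁ (s₁, s₂)) +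
          2 ^ p * (∫⁻ s₂ in Ω, Jfun Ψ p w₂ (s₁, s₂))) := lintegral_mono inner_le
    _ = (∫⁻ s₁ in Ω, 2 ^ p * ∫⁻ s₂ in Ω, Jfun Ψ p w₁ (s₁, s₂)) +
          ∫⁻ s₁ in Ω, 2 ^ p * ∫⁻ s₂ in Ω, Jfun Ψ p w₂ (s₁, s₂) :=
        lintegral_add_left ((hJ₁.lintegral_prod_right').const_mul _) _
    _ = 2 ^ p * semiIntegral Ψ p Ω w₁ + 2 ^ p * semiIntegral Ψ p Ω w₂ := by
        rw [lintegral_const_mul' _ _ h2p, lintegral_const_mul' _ _ h2p]; rfl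

lemma conj_exponent {pe : ℝ≥0∞} (hpe1 : 1 ≤ pe) :
    1 / (1 : ℝ≥0∞) = 1 / (1 - pe⁻¹)⁻¹ + 1 / pe := by
  rw [one_div, one_div, one_div, inv_inv, inv_one]
  exact (tsub_add_cancel_of_le (ENNReal.inv_le_one.mpr hpe1)).symm

lemma integrable_smul_of_memℒp {pe : ℝ≥0∞} (hpe1 : 1 ≤ pe)
    {ψ : ℝ → ℝ} (hψc : Continuous ψ) (hψs : HasCompactSupport ψ)
    {h : ℝ → Euc d} (hh : MemLp h pe (volume.restrict Ω)) :
    Integrable (fun s => ψ s • h s) (volume.restrict Ω) := by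
  have hψq : MemLp ψ (1 - pe⁻¹)⁻¹ (volume.restrict Ω) :=
    (hψc.memLp_of_hasCompactSupport hψs).restrict Ω
  exact memLp_one_iff_integrable.mp (hh.smul hψq (hpqr := ⟨by simpa only [one_div] using (conj_exponent hpe1).symm⟩))

lemma norm_integral_smul_le {pe : ℝ≥0∞} (hpe1 : 1 ≤ pe)
    {ψ : ℝ → ℝ} (hψc : Continuous ψ) (hψs : HasCompactSupport ψ)
    {h : ℝ → Euc d} (hh : MemLp h pe (volume.restrict Ω)) :
    ‖∫ s in Ω, ψ s • h s‖ ≤ (eLpNorm ψ (1 - pe⁻¹)⁻¹ (volume.restrict Ω)).toReal *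
      (eLpNorm h pe (volume.restrict Ω)).toReal := by
  set μ := volume.restrict Ω
  have hψq : MemLp ψ (1 - pe⁻¹)⁻¹ μ := (hψc.memLp_of_hasCompactSupport hψs).restrict Ω
  have hint : Integrable (fun s => ψ s • h s) μ := integrable_smul_of_memℒp hpe1 hψc hψs hh
  have h1 : ‖∫ s in Ω, ψ s • h s‖ ≤ (eLpNorm (fun s => ψ s • h s) 1 μ).toReal := by
    calc ‖∫ s in Ω, ψ s • h s‖ ≤ ∫ s in Ω, ‖ψ s • h s‖ := norm_integral_le_integral_norm _
      _ = (∫⁻ s, ‖ψ s • h s‖ₑ ∂μ).toReal := integral_norm_eq_lintegral_enorm hint.1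
      _ = (eLpNorm (fun s => ψ s • h s) 1 μ).toReal := by rw [eLpNorm_one_eq_lintegral_enorm]
  refine h1.trans ?_
  have h2 : eLpNorm (fun s => ψ s • h s) 1 μ ≤
      eLpNorm ψ (1 - pe⁻¹)⁻¹ μ * eLpNorm h pe μ := by
    have := eLpNorm_smul_le_mul_eLpNorm (p := (1 - pe⁻¹)⁻¹) (q := pe) (r := 1) hh.1 hψq.1
      (hpqr := ⟨by simpa only [one_div] using (conj_exponent hpe1).symm⟩)
    exact this
  rw [← ENNReal.toReal_mul]
  exact ENNReal.toReal_mono (ENNReal.mul_ne_top hψq.eLpNorm_ne_top hh.eLpNorm_ne_top) h2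

lemma tendsto_integral_smul {pe : ℝ≥0∞} (hpe1 : 1 ≤ pe)
    {ψ : ℝ → ℝ} (hψc : Continuous ψ) (hψs : HasCompactSupport ψ)
    {h : ℕ → ℝ → Euc d} {g : ℝ → Euc d}
    (hh : ∀ n, MemLp (h n) pe (volume.restrict Ω)) (hg : MemLp g pe (volume.restrict Ω))
    (hconv : Tendsto (fun n => eLpNorm (fun s => h n s - g s) pe (volume.restrict Ω))
      atTop (𝓝 0)) :
    Tendsto (fun n => ∫ s in Ω, ψ s • h n s) atTop (𝓝 (∫ s in Ω, ψ s • g s)) := by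
  set μ := volume.restrict Ω
  set C := (eLpNorm ψ (1 - pe⁻¹)⁻¹ μ).toReal with hC
  rw [tendsto_iff_norm_sub_tendsto_zero]
  have hbound : ∀ n, ‖(∫ s in Ω, ψ s • h n s) - ∫ s in Ω, ψ s • g s‖ ≤
      C * (eLpNorm (fun s => h n s - g s) pe μ).toReal := by
    intro n
    have hint1 := integrable_smul_of_memℒp hpe1 hψc hψs (hh n)
    have hint2 := integrable_smul_of_memℒp hpe1 hψc hψs hg
    have heq : (∫ s in Ω, ψ s • h n s) - ∫ s in Ω, ψ s • g s =
        ∫ s in Ω, ψ s • (h n s - g s) := by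
      rw [← integral_sub hint1 hint2]
      refine integral_congr_ae (Eventually.of_forall fun s => ?_)
      simp [smul_sub]
    rw [heq]
    exact norm_integral_smul_le hpe1 hψc hψs ((hh n).sub hg)
  have htoReal : Tendsto (fun n => (eLpNorm (fun s => h n s - g s) pe μ).toReal)
      atTop (𝓝 0) := by
    have := (ENNReal.tendsto_toReal (a := 0) (by simp)).comp hconv
    simpa [Function.comp_def] using this
  have hmul : Tendsto (fun n => C * (eLpNorm (fun s => h n s - g s) pe μ).toReal)
      atTop (𝓝 0) := by
    simpa using htoReal.const_mul C
  exact squeeze_zero (fun n => norm_nonneg _) hbound hmul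

end AuxiliaryLemmas


/-- **Statement 6** (`W^{k+Ψ,p}(Ω, ℝ^d)` is a Banach space).  The space `W^{k+Ψ,p}(Ω, ℝ^d)`
with the norm `‖f‖_{W^{k,p}} + [f^{(k)}]_{Ψ,p}` is complete: every Cauchy sequence
(of functions together with their systems of weak derivatives) converges in norm to an
element of the space. -/
theorem statement6 (d : ℕ) (Ω : Set ℝ) (hΩmeas : MeasurableSet Ω) (hΩne : Ω.Nonempty)
    (Ψ : ℝ → ℝ) (hΨmeas : Measurable Ψ) (hΨnn : ∀ x ≥ (0 : ℝ), 0 ≤ Ψ x)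
    (p : ℝ) (hp : 1 ≤ p) (k : ℕ)
    (F : ℕ → ℕ → ℝ → Euc d)
    (hF : ∀ n, MemWkPsi d Ω Ψ p k (F n))
    (hCauchy : ∀ ε : ℝ≥0∞, 0 < ε → ∃ N : ℕ, ∀ m ≥ N, ∀ n ≥ N,
      diffNormW d Ω Ψ p k (F m) (F n) < ε) :
    ∃ G : ℕ → ℝ → Euc d, MemWkPsi d Ω Ψ p k G ∧
      Tendsto (fun n => diffNormW d Ω Ψ p k (F n) G) atTop (𝓝 0) := by
  classical
  set μ := volume.restrict Ω with hμdef
  set pe := ENNReal.ofReal p with hpedef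
  have hp0 : (0:ℝ) < p := lt_of_lt_of_le zero_lt_one hp
  have hpe1 : 1 ≤ pe := by
    rw [hpedef, ← ENNReal.ofReal_one]
    exact ENNReal.ofReal_le_ofReal hp
  have hpe0 : pe ≠ 0 := (lt_of_lt_of_le zero_lt_one hpe1).ne'
  haveI : Fact (1 ≤ pe) := ⟨hpe1⟩
  have hmem : ∀ n i, i ≤ k → MemLp (F n i) pe μ := fun n i hi => (hF n).2.1 i hi
  set g : ℕ → ℕ → Lp (Euc d) pe μ := fun n i =>
    if h : i ≤ k then ((hF n).2.1 i h).toLp (F n i) else 0 with hgdef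
  have hgcoe : ∀ n i, i ≤ k → (g n i : ℝ → Euc d) =ᵐ[μ] F n i := by
    intro n i hi
    rw [hgdef]
    simp only [dif_pos hi]
    exact MemLp.coeFn_toLp _
  have hkey : ∀ i, i ≤ k → ∀ m n, eLpNorm (fun s => F m i s - F n i s) pe μ ≤
      diffNormW d Ω Ψ p k (F m) (F n) := by
    intro i hi m n
    unfold diffNormW
    calc eLpNorm (fun s => F m i s - F n i s) pe μ
        ≤ ∑ j ∈ Finset.range (k+1), eLpNorm (fun s => F m j s - F n j s) pe μ :=
          Finset.single_le_sum (f := fun j => eLpNorm (fun s => F m j s - F n j s) pe μ)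
            (fun j _ => zero_le) (Finset.mem_range.mpr (Nat.lt_succ_of_le hi))
      _ ≤ _ := le_self_add
  have hkey2 : ∀ m n, seminormENN Ψ p Ω (fun s => F m k s - F n k s) ≤
      diffNormW d Ω Ψ p k (F m) (F n) := by
    intro m n
    unfold diffNormW
    exact le_add_self
  have hcauchy : ∀ i, CauchySeq (fun n => g n i) := by
    intro i
    by_cases hi : i ≤ k
    · rw [Metric.cauchySeq_iff]
      intro ε hε
      obtain ⟨N, hN⟩ := hCauchy (ENNReal.ofReal ε) (ENNReal.ofReal_pos.mpr hε)
      refine ⟨N, fun m hm n hn => ?_⟩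
      have hd : dist (g m i) (g n i) =
          (eLpNorm (fun s => F m i s - F n i s) pe μ).toReal := by
        rw [Lp.dist_def]
        congr 1
        refine eLpNorm_congr_ae ?_
        filter_upwards [hgcoe m i hi, hgcoe n i hi] with s h2 h3
        simp only [Pi.sub_apply, h2, h3]
      rw [hd]
      exact ENNReal.toReal_lt_of_lt_ofReal
        (lt_of_le_of_lt (hkey i hi m n) (hN m hm n hn))
    · have hconst : (fun n => g n i) = fun _ => (0 : Lp (Euc d) pe μ) := by
        funext n
        rw [hgdef]
        simp [dif_neg hi]
      rw [hconst]
      exact cauchySeq_const _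
  have hLex : ∀ i, ∃ L : Lp (Euc d) pe μ, Tendsto (fun n => g n i) atTop (𝓝 L) :=
    fun i => cauchySeq_tendsto_of_complete (hcauchy i)
  choose L hL using hLex
  set G : ℕ → ℝ → Euc d := fun i => ⇑(L i) with hGdef
  have hGmem : ∀ i, MemLp (G i) pe μ := fun i => Lp.memLp (L i)
  have hGconv : ∀ i, i ≤ k →
      Tendsto (fun n => eLpNorm (fun s => F n i s - G i s) pe μ) atTop (𝓝 0) := by
    intro i hi
    have h1 := (Lp.tendsto_Lp_iff_tendsto_eLpNorm' (fun n => g n i) (L i)).mp (hL i)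
    refine h1.congr fun n => ?_
    refine eLpNorm_congr_ae ?_
    filter_upwards [hgcoe n i hi] with s hs
    simp only [Pi.sub_apply, hs, hGdef]
  have hInM : TendstoInMeasure μ (fun n => F n k) atTop (G k) := by
    refine tendstoInMeasure_of_tendsto_eLpNorm hpe0
      (fun n => (hmem n k le_rfl).1) (hGmem k).1 ?_
    exact hGconv k le_rfl
  obtain ⟨φ, hφmono, hae⟩ := hInM.exists_seq_tendsto_ae
  have hsemi_le : ∀ ε : ℝ≥0∞, 0 < ε → ∃ N, ∀ m ≥ N,
      seminormENN Ψ p Ω (fun s => F m k s - G k s) ≤ ε := by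
    intro ε hε
    obtain ⟨N, hN⟩ := hCauchy ε hε
    refine ⟨N, fun m hm => ?_⟩
    have hfat : semiIntegral Ψ p Ω (fun s => F m k s - G k s) ≤
        Filter.liminf (fun j => semiIntegral Ψ p Ω
          (fun s => F m k s - F (φ j) k s)) Filter.atTop := by
      refine fatou_semiIntegral hΨmeas _ _
        (fun j => ((hmem m k le_rfl).1.sub ((hmem (φ j) k le_rfl).1))) ?_
      filter_upwards [hae] with s hs
      exact tendsto_const_nhds.sub hs
    have hbound : ∀ᶠ j in atTop,
        semiIntegral Ψ p Ω (fun s => F m k s - F (φ j) k s) ≤ ε ^ p := by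
      filter_upwards [hφmono.tendsto_atTop.eventually_ge_atTop N] with j hj
      have h1 : seminormENN Ψ p Ω (fun s => F m k s - F (φ j) k s) < ε :=
        lt_of_le_of_lt (hkey2 m (φ j)) (hN m hm (φ j) hj)
      have h2 : (seminormENN Ψ p Ω (fun s => F m k s - F (φ j) k s)) ^ p =
          semiIntegral Ψ p Ω (fun s => F m k s - F (φ j) k s) := by
        rw [seminormENN, one_div, ENNReal.rpow_inv_rpow hp0.ne']
      rw [← h2]
      exact ENNReal.rpow_le_rpow h1.le hp0.le
    have h3 : semiIntegral Ψ p Ω (fun s => F m k s - G k s) ≤ ε ^ p :=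
      hfat.trans (Filter.liminf_le_of_frequently_le' hbound.frequently)
    calc seminormENN Ψ p Ω (fun s => F m k s - G k s)
        = (semiIntegral Ψ p Ω (fun s => F m k s - G k s)) ^ (1/p) := rfl
      _ ≤ (ε ^ p) ^ (1/p) := ENNReal.rpow_le_rpow h3 (by positivity)
      _ = ε := by rw [one_div, ENNReal.rpow_rpow_inv hp0.ne']
  have hsemi_tendsto : Tendsto (fun n =>
      seminormENN Ψ p Ω (fun s => F n k s - G k s)) atTop (𝓝 0) :=
    ENNReal.tendsto_atTop_zero.mpr hsemi_le
  -- finiteness of the seminorm of G k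
  obtain ⟨N₀, hN₀⟩ := hsemi_le 1 zero_lt_one
  have hsfin1 : semiIntegral Ψ p Ω (fun s => F N₀ k s - G k s) ≤ 1 := by
    have h1 := hN₀ N₀ le_rfl
    have h2 : (seminormENN Ψ p Ω (fun s => F N₀ k s - G k s)) ^ p =
        semiIntegral Ψ p Ω (fun s => F N₀ k s - G k s) := by
      rw [seminormENN, one_div, ENNReal.rpow_inv_rpow hp0.ne']
    rw [← h2]
    calc (seminormENN Ψ p Ω (fun s => F N₀ k s - G k s)) ^ p
        ≤ (1 : ℝ≥0∞) ^ p := ENNReal.rpow_le_rpow h1 hp0.le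
      _ = 1 := ENNReal.one_rpow p
  have hsfin2 : semiIntegral Ψ p Ω (fun s => G k s - F N₀ k s) ≤ 1 := by
    rw [semiIntegral_sub_comm]
    exact hsfin1
  have hFkfin : semiIntegral Ψ p Ω (F N₀ k) ≠ ∞ := by
    intro hcon
    have h := (hF N₀).2.2
    rw [seminormENN, hcon, ENNReal.top_rpow_of_pos (by positivity)] at h
    exact lt_irrefl _ h
  have h2p : (2 : ℝ≥0∞) ^ p ≠ ∞ := ENNReal.rpow_ne_top_of_nonneg hp0.le (by norm_num)
  have hGfin : semiIntegral Ψ p Ω (G k) ≠ ∞ := by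
    have hdecomp : semiIntegral Ψ p Ω (G k) =
        semiIntegral Ψ p Ω (fun s => (G k s - F N₀ k s) + F N₀ k s) := by
      congr 1
      funext s
      simp
    have hle := semiIntegral_add_le (Ψ := Ψ) (Ω := Ω) hΨmeas hp0.le
      ((hGmem k).1.sub ((hmem N₀ k le_rfl).1)) ((hmem N₀ k le_rfl).1)
    rw [hdecomp]
    refine ne_top_of_le_ne_top ?_ hle
    exact ENNReal.add_ne_top.mpr
      ⟨ENNReal.mul_ne_top h2p (lt_of_le_of_lt hsfin2 ENNReal.one_lt_top).ne,
       ENNReal.mul_ne_top h2p hFkfin⟩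
  have hGsem : seminormENN Ψ p Ω (G k) < ⊤ := by
    rw [seminormENN]
    exact ENNReal.rpow_lt_top_of_nonneg (by positivity) hGfin
  -- weak derivatives of G
  have hGweak : ∀ i, i < k → HasWeakDerivOn Ω (G i) (G (i + 1)) := by
    intro i hik ϕ hϕ hϕs hϕsupp
    have hderivc : Continuous (deriv ϕ) := hϕ.continuous_deriv (by simp)
    have hderivs : HasCompactSupport (deriv ϕ) := hϕs.deriv
    have h1 : Tendsto (fun n => ∫ s in Ω, deriv ϕ s • F n i s) atTop
        (𝓝 (∫ s in Ω, deriv ϕ s • G i s)) :=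
      tendsto_integral_smul hpe1 hderivc hderivs (fun n => hmem n i hik.le) (hGmem i)
        (hGconv i hik.le)
    have h2 : Tendsto (fun n => ∫ s in Ω, ϕ s • F n (i+1) s) atTop
        (𝓝 (∫ s in Ω, ϕ s • G (i+1) s)) :=
      tendsto_integral_smul hpe1 hϕ.continuous hϕs (fun n => hmem n (i+1) hik)
        (hGmem (i+1)) (hGconv (i+1) hik)
    have h3 : (fun n => ∫ s in Ω, deriv ϕ s • F n i s) =
        fun n => - ∫ s in Ω, ϕ s • F n (i+1) s :=
      funext fun n => (hF n).1 i hik ϕ hϕ hϕs hϕsupp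
    exact tendsto_nhds_unique (h3 ▸ h1) h2.neg
  refine ⟨G, ⟨hGweak, fun i _ => hGmem i, hGsem⟩, ?_⟩
  have hsum : Tendsto (fun n => ∑ i ∈ Finset.range (k+1),
      eLpNorm (fun s => F n i s - G i s) pe μ) atTop (𝓝 0) := by
    have h0 : (0 : ℝ≥0∞) = ∑ _i ∈ Finset.range (k+1), (0 : ℝ≥0∞) := by simp
    rw [h0]
    exact tendsto_finset_sum _ fun i hi =>
      hGconv i (Nat.lt_succ_iff.mp (Finset.mem_range.mp hi))
  have htotal := hsum.add hsemi_tendsto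
  rw [add_zero] at htotal
  exact htotal
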